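/- arXiv:2406.05394 — 4 statements merged into one kernel-verified Lean document; each statement's English description precedes it below -/
import Mathlib

section
/- For every a ≥ 1 and every real z, |Φ(az) - Φ(z)| ≤ (e^{-1/2}/√(2π)) · (a - 1), where Φ is the standard normal cumulative distribution function. -/
open MeasureTheory Real

/-- The standard normal cumulative distribution function. -/
noncomputable def stdNormalCDF (z : ℝ) : ℝ :=
  ∫ t in Set.Iic z, (Real.sqrt (2 * Real.pi))⁻¹ * Real.exp (-t ^ 2 / 2)

noncomputable def gaussPDF (t : ℝ) : ℝ := (Real.sqrt (2 * Real.pi))⁻¹ * Real.exp (-t ^ 2 / 2)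

lemma stdNormalCDF_eq (z : ℝ) : stdNormalCDF z = ∫ t in Set.Iic z, gaussPDF t := rfl

lemma gauss_integrable : Integrable gaussPDF := by
  have h : Integrable (fun t : ℝ => Real.exp (-(1/2 : ℝ) * t ^ 2)) :=
    integrable_exp_neg_mul_sq (by norm_num)
  have := h.const_mul (Real.sqrt (2 * Real.pi))⁻¹
  convert this using 2 with t
  unfold gaussPDF
  ring_nf

lemma abs_mul_gauss_le (x : ℝ) : |x| * Real.exp (-x ^ 2 / 2) ≤ Real.exp (-(1:ℝ) / 2) := by
  have h1 : |x| ≤ Real.exp ((x ^ 2 - 1) / 2) := by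
    have := Real.add_one_le_exp ((x ^ 2 - 1) / 2)
    nlinarith [sq_nonneg (|x| - 1), sq_abs x]
  calc |x| * Real.exp (-x ^ 2 / 2) ≤ Real.exp ((x ^ 2 - 1) / 2) * Real.exp (-x ^ 2 / 2) := by
        apply mul_le_mul_of_nonneg_right h1 (Real.exp_pos _).le
    _ = Real.exp (-(1:ℝ) / 2) := by rw [← Real.exp_add]; ring_nf

theorem normal_cdf_scaling_bound (a : ℝ) (ha : 1 ≤ a) (z : ℝ) :
    |stdNormalCDF (a * z) - stdNormalCDF z| ≤
      Real.exp (-(1 : ℝ) / 2) / Real.sqrt (2 * Real.pi) * (a - 1) := by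
  have hdiff : stdNormalCDF (a * z) - stdNormalCDF z = ∫ t in z..(a * z), gaussPDF t := by
    rw [stdNormalCDF_eq, stdNormalCDF_eq]
    have h := intervalIntegral.integral_Iic_sub_Iic (f := gaussPDF) (μ := volume) (a := z)
      (b := a * z) gauss_integrable.integrableOn gauss_integrable.integrableOn
    linarith [h]
  have hC : ∀ x ∈ Set.uIoc z (a * z), ‖gaussPDF x‖ ≤ (Real.sqrt (2 * Real.pi))⁻¹ * Real.exp (-z ^ 2 / 2) := by
    intro x hx
    have hx2 : z ^ 2 ≤ x ^ 2 := by
      rcases le_or_gt 0 z with hz | hz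
      · have : z ≤ x := by
          rcases Set.uIoc_subset_uIcc hx with ⟨h1, h2⟩
          have : min z (a * z) = z := min_eq_left (by nlinarith)
          simpa [this] using h1
        nlinarith
      · have : x ≤ z := by
          rcases Set.uIoc_subset_uIcc hx with ⟨h1, h2⟩
          have : max z (a * z) = z := max_eq_left (by nlinarith)
          simpa [this] using h2
        nlinarith
    have hpos : (0:ℝ) < Real.sqrt (2 * Real.pi) := Real.sqrt_pos.mpr (by positivity)
    have : gaussPDF x ≤ (Real.sqrt (2 * Real.pi))⁻¹ * Real.exp (-z ^ 2 / 2) := by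
      unfold gaussPDF
      apply mul_le_mul_of_nonneg_left _ (by positivity)
      exact Real.exp_le_exp.mpr (by linarith)
    have hnn : 0 ≤ gaussPDF x := by unfold gaussPDF; positivity
    rwa [Real.norm_eq_abs, abs_of_nonneg hnn]
  have hbound := intervalIntegral.norm_integral_le_of_norm_le_const hC
  rw [hdiff, ← Real.norm_eq_abs]
  refine hbound.trans ?_
  have habs : |a * z - z| = (a - 1) * |z| := by
    rw [show a * z - z = (a - 1) * z by ring, abs_mul, abs_of_nonneg (by linarith)]
  rw [habs]
  have key := abs_mul_gauss_le z
  have hpos : (0:ℝ) < Real.sqrt (2 * Real.pi) := Real.sqrt_pos.mpr (by positivity)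
  rw [div_eq_mul_inv]
  have ha1 : (0:ℝ) ≤ a - 1 := by linarith
  calc (Real.sqrt (2 * Real.pi))⁻¹ * Real.exp (-z ^ 2 / 2) * ((a - 1) * |z|)
      = (|z| * Real.exp (-z ^ 2 / 2)) * (Real.sqrt (2 * Real.pi))⁻¹ * (a - 1) := by ring
    _ ≤ Real.exp (-(1:ℝ) / 2) * (Real.sqrt (2 * Real.pi))⁻¹ * (a - 1) := by
        apply mul_le_mul_of_nonneg_right _ ha1
        exact mul_le_mul_of_nonneg_right key (by positivity)
end

section
/- Let X₁, …, X_n be i.i.d. nonnegative random variables with mean μ = E[X₁] > 0 and finite ℓ-th moment E[X₁^ℓ] for some ℓ ∈ (1, 2]. Then for every t with 0 < t ≤ μ, P((1/n)∑_{i=1}^n X_i ≤ t) ≤ exp( -n(ℓ-1)(μ - t)^{ℓ/(ℓ-1)} / (ℓ · (E[X₁^ℓ])^{1/(ℓ-1)}) ). -/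
/-!
Chernoff's method: for every `θ ≥ 0`, Markov's inequality applied to `exp (-θ ∑ Xᵢ)` and
independence give `P(∑ Xᵢ ≤ n t) ≤ exp (θ n t) E[exp (-θ X₁)]ⁿ`. Since
`exp (-x) ≤ 1 - x + x ^ ℓ / ℓ` for `x ≥ 0` and `ℓ ∈ [1, 2]`, and `1 + y ≤ exp y`, we get
`E[exp (-θ X₁)] ≤ exp (-(θ m - θ ^ ℓ M / ℓ))` with `m = E[X₁]`, `M = E[X₁ ^ ℓ]`. The exponent
`θ (m - t) - θ ^ ℓ M / ℓ` is maximised at `θ = ((m - t) / M) ^ (1 / (ℓ - 1))`, where it equals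
`(ℓ - 1) (m - t) ^ (ℓ / (ℓ - 1)) / (ℓ M ^ (1 / (ℓ - 1)))`.
-/

open MeasureTheory ProbabilityTheory Real

theorem one_sub_exp_neg_le_rpow {x p : ℝ} (hx : 0 ≤ x) (hp0 : 0 ≤ p) (hp1 : p ≤ 1) :
    1 - exp (-x) ≤ x ^ p := by
  rcases le_total x 1 with hx1 | hx1
  · calc 1 - exp (-x) ≤ x := by linarith [add_one_le_exp (-x)]
      _ ≤ x ^ p := self_le_rpow_of_le_one hx hx1 hp1
  · calc 1 - exp (-x) ≤ 1 := by linarith [exp_pos (-x)]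
      _ ≤ x ^ p := one_le_rpow hx1 hp0

theorem exp_neg_le_one_sub_add_rpow_div {ℓ x : ℝ} (hℓ1 : 1 ≤ ℓ) (hℓ2 : ℓ ≤ 2) (hx : 0 ≤ x) :
    exp (-x) ≤ 1 - x + x ^ ℓ / ℓ := by
  let g : ℝ → ℝ := fun y ↦ 1 - y + y ^ ℓ / ℓ - exp (-y)
  have hg : ∀ y, HasDerivAt g (-1 + y ^ (ℓ - 1) + exp (-y)) y := by
    intro y
    have hrpow := (hasDerivAt_rpow_const (x := y) (Or.inr hℓ1)).div_const ℓ
    rw [mul_div_cancel_left₀ _ (by positivity)] at hrpow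
    exact ((((hasDerivAt_id y).const_sub 1).add hrpow).sub (hasDerivAt_neg y).exp).congr_deriv
      (by ring)
  have hmono : MonotoneOn g (Set.Ici 0) :=
    monotoneOn_of_hasDerivWithinAt_nonneg (convex_Ici 0)
      (fun y _ ↦ (hg y).continuousAt.continuousWithinAt)
      (fun y _ ↦ (hg y).hasDerivWithinAt)
      (fun y hy ↦ by
        rw [interior_Ici] at hy
        linarith [one_sub_exp_neg_le_rpow (le_of_lt hy) (sub_nonneg.2 hℓ1)
          (by linarith : ℓ - 1 ≤ 1)])
  have hg0x : g 0 ≤ g x := hmono Set.self_mem_Ici hx hx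
  simp only [g, zero_rpow (by positivity : ℓ ≠ 0), neg_zero, exp_zero, zero_div] at hg0x
  linarith

theorem integrable_exp_neg_mul_of_nonneg {Ω : Type*} [MeasurableSpace Ω] {μ : Measure Ω}
    [IsFiniteMeasure μ] {Y : Ω → ℝ} (hY : AEStronglyMeasurable Y μ) (hY0 : 0 ≤ᵐ[μ] Y) {θ : ℝ} (hθ : 0 ≤ θ) :
    Integrable (fun ω ↦ exp (-θ * Y ω)) μ := by
  refine (integrable_const (1 : ℝ)).mono' (by fun_prop) ?_
  filter_upwards [hY0] with ω hω
  rw [norm_of_nonneg (exp_pos _).le, exp_le_one_iff]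
  exact mul_nonpos_of_nonpos_of_nonneg (neg_nonpos.2 hθ) hω

/-- For `M = 0` both sides vanish, the right-hand side through division by zero. -/
theorem legendre_rpow {ℓ d M : ℝ} (hℓ : 1 < ℓ) (hd : 0 ≤ d) (hM : 0 ≤ M) :
    (d / M) ^ (1 / (ℓ - 1)) * d - ((d / M) ^ (1 / (ℓ - 1))) ^ ℓ * M / ℓ =
      (ℓ - 1) * d ^ (ℓ / (ℓ - 1)) / (ℓ * M ^ (1 / (ℓ - 1))) := by
  have hℓ1 : ℓ - 1 ≠ 0 := (sub_pos.2 hℓ).ne'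
  set r := 1 / (ℓ - 1) with hr_def
  have hr : r ≠ 0 := by positivity
  rcases hM.eq_or_lt with rfl | hM
  · simp [zero_rpow hr]
  have hq_add : ℓ / (ℓ - 1) = r + 1 := by rw [hr_def]; field_simp; ring
  have hq_mul : ℓ / (ℓ - 1) = r * ℓ := by rw [hr_def]; field_simp
  have hdq : d ^ (ℓ / (ℓ - 1)) = d ^ r * d := by
    rw [hq_add, rpow_add' hd (by positivity), rpow_one]
  have hMq : M ^ (ℓ / (ℓ - 1)) = M ^ r * M := by
    rw [hq_add, rpow_add hM, rpow_one]
  rw [← rpow_mul (div_nonneg hd hM.le), ← hq_mul, div_rpow hd hM.le, div_rpow hd hM.le, hMq, hdq]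
  have : 0 < M ^ r := rpow_pos_of_pos hM r
  field_simp

theorem mgf_neg_le_one_sub_add_rpow_div {Ω : Type*} [MeasurableSpace Ω] {μ : Measure Ω}
    [IsProbabilityMeasure μ] {Y : Ω → ℝ} {ℓ θ : ℝ} (hY0 : 0 ≤ᵐ[μ] Y) (hY : Integrable Y μ)
    (hYℓ : Integrable (fun ω ↦ Y ω ^ ℓ) μ) (hℓ1 : 1 ≤ ℓ) (hℓ2 : ℓ ≤ 2) (hθ : 0 ≤ θ) :
    mgf Y μ (-θ) ≤ 1 - θ * μ[Y] + θ ^ ℓ * μ[fun ω ↦ Y ω ^ ℓ] / ℓ := by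
  have hpt : ∀ᵐ ω ∂μ, exp (-θ * Y ω) ≤ 1 - θ * Y ω + θ ^ ℓ * Y ω ^ ℓ / ℓ := by
    filter_upwards [hY0] with ω hω
    have := exp_neg_le_one_sub_add_rpow_div hℓ1 hℓ2 (mul_nonneg hθ hω)
    rwa [mul_rpow hθ hω, ← neg_mul] at this
  have hlin : Integrable (fun ω ↦ 1 - θ * Y ω) μ := (integrable_const 1).sub (hY.const_mul θ)
  have hpow : Integrable (fun ω ↦ θ ^ ℓ * Y ω ^ ℓ / ℓ) μ := (hYℓ.const_mul _).div_const ℓ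
  calc mgf Y μ (-θ) ≤ ∫ ω, (1 - θ * Y ω + θ ^ ℓ * Y ω ^ ℓ / ℓ) ∂μ :=
        integral_mono_ae (integrable_exp_neg_mul_of_nonneg hY.1 hY0 hθ) (hlin.add hpow) hpt
    _ = 1 - θ * μ[Y] + θ ^ ℓ * μ[fun ω ↦ Y ω ^ ℓ] / ℓ := by
        rw [integral_add hlin hpow, integral_sub (integrable_const 1) (hY.const_mul θ),
          integral_div, integral_const_mul, integral_const_mul]
        simp

theorem measure_sum_le_le_exp_mul_mgf_pow {Ω ι : Type*} [MeasurableSpace Ω] {μ : Measure Ω}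
    [IsFiniteMeasure μ] [Fintype ι] {X : ι → Ω → ℝ} {j : ι} (h_meas : ∀ i, Measurable (X i))
    (h_indep : iIndepFun X μ) (hident : ∀ i, IdentDistrib (X i) (X j) μ μ) {t : ℝ} (ht : t ≤ 0)
    (h_int : Integrable (fun ω ↦ exp (t * X j ω)) μ) (ε : ℝ) :
    μ.real {ω | ∑ i, X i ω ≤ ε} ≤ exp (-t * ε) * mgf (X j) μ t ^ Fintype.card ι := by
  have h_int_sum : Integrable (fun ω ↦ exp (t * (∑ i, X i) ω)) μ :=
    h_indep.integrable_exp_mul_sum h_meas fun i _ ↦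
      ((hident i).comp (measurable_const_mul t).exp).integrable_iff.2 h_int
  have h_chernoff := measure_le_le_exp_mul_mgf ε ht h_int_sum
  rw [mgf_sum_of_identDistrib h_meas h_indep (fun i _ k _ ↦ (hident i).trans (hident k).symm)
    (Finset.mem_univ j)] at h_chernoff
  simpa [Finset.sum_apply] using h_chernoff

theorem chernoff_lower_tail_iid_nonneg_general
    {Ω : Type*} [MeasurableSpace Ω] (μ : Measure Ω) [IsProbabilityMeasure μ]
    (n : ℕ) (hn : 0 < n) (X : Fin n → Ω → ℝ)
    (hXmeas : ∀ i, Measurable (X i))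
    (hindep : iIndepFun X μ)
    (hident : ∀ i, IdentDistrib (X i) (X ⟨0, hn⟩) μ μ)
    (hpos : ∀ i ω, 0 ≤ X i ω)
    (ℓ : ℝ) (hℓ1 : 1 < ℓ) (hℓ2 : ℓ ≤ 2)
    (hintℓ : Integrable (fun ω => X ⟨0, hn⟩ ω ^ ℓ) μ)
    (hint1 : Integrable (X ⟨0, hn⟩) μ)
    (t : ℝ) (ht' : t ≤ ∫ ω, X ⟨0, hn⟩ ω ∂μ) :
    (μ {ω | (1 / (n : ℝ)) * ∑ i, X i ω ≤ t}).toReal ≤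
      Real.exp (-((n : ℝ) * (ℓ - 1) * ((∫ ω, X ⟨0, hn⟩ ω ∂μ) - t) ^ (ℓ / (ℓ - 1))) /
        (ℓ * (∫ ω, X ⟨0, hn⟩ ω ^ ℓ ∂μ) ^ (1 / (ℓ - 1)))) := by
  set X₀ := X ⟨0, hn⟩
  set m := ∫ ω, X₀ ω ∂μ
  set M := ∫ ω, X₀ ω ^ ℓ ∂μ
  have hX₀ : 0 ≤ᵐ[μ] X₀ := ae_of_all μ (hpos _)
  have hM : 0 ≤ M := integral_nonneg fun ω ↦ rpow_nonneg (hpos _ ω) ℓ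
  set θ := ((m - t) / M) ^ (1 / (ℓ - 1))
  have hθ : 0 ≤ θ := rpow_nonneg (div_nonneg (sub_nonneg.2 ht') hM) _
  have hmgf : mgf X₀ μ (-θ) ≤ exp (-(θ * m - θ ^ ℓ * M / ℓ)) := by
    refine (mgf_neg_le_one_sub_add_rpow_div hX₀ hint1 hintℓ hℓ1.le hℓ2 hθ).trans ?_
    linarith [add_one_le_exp (-(θ * m - θ ^ ℓ * M / ℓ))]
  have hset : {ω | (1 / (n : ℝ)) * ∑ i, X i ω ≤ t} = {ω | ∑ i, X i ω ≤ n * t} := by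
    ext ω
    simp [one_div, inv_mul_le_iff₀ (Nat.cast_pos.2 hn : (0 : ℝ) < n)]
  calc (μ {ω | (1 / (n : ℝ)) * ∑ i, X i ω ≤ t}).toReal
      = μ.real {ω | ∑ i, X i ω ≤ n * t} := by rw [hset, measureReal_def]
    _ ≤ exp (θ * (n * t)) * mgf X₀ μ (-θ) ^ n := by
        simpa using measure_sum_le_le_exp_mul_mgf_pow hXmeas hindep hident (neg_nonpos.2 hθ)
          (integrable_exp_neg_mul_of_nonneg hint1.1 hX₀ hθ) (n * t)
    _ ≤ exp (θ * (n * t)) * exp (-(θ * m - θ ^ ℓ * M / ℓ)) ^ n := by gcongr; exact mgf_nonneg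
    _ = exp (-(n * (θ * (m - t) - θ ^ ℓ * M / ℓ))) := by
        rw [← exp_nat_mul, ← exp_add]
        congr 1
        ring
    _ = _ := by
        rw [legendre_rpow hℓ1 (sub_nonneg.2 ht') hM]
        ring_nf

theorem chernoff_lower_tail_iid_nonneg
    {Ω : Type*} [MeasurableSpace Ω] (μ : Measure Ω) [IsProbabilityMeasure μ]
    (n : ℕ) (hn : 0 < n) (X : Fin n → Ω → ℝ)
    (hXmeas : ∀ i, Measurable (X i))
    (hindep : iIndepFun X μ)
    (hident : ∀ i, IdentDistrib (X i) (X ⟨0, hn⟩) μ μ)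
    (hpos : ∀ i ω, 0 ≤ X i ω)
    (ℓ : ℝ) (hℓ1 : 1 < ℓ) (hℓ2 : ℓ ≤ 2)
    (hintℓ : Integrable (fun ω => X ⟨0, hn⟩ ω ^ ℓ) μ)
    (hint1 : Integrable (X ⟨0, hn⟩) μ)
    (hmean : 0 < ∫ ω, X ⟨0, hn⟩ ω ∂μ)
    (t : ℝ) (ht : 0 < t) (ht' : t ≤ ∫ ω, X ⟨0, hn⟩ ω ∂μ) :
    (μ {ω | (1 / (n : ℝ)) * ∑ i, X i ω ≤ t}).toReal ≤
      Real.exp (-((n : ℝ) * (ℓ - 1) * ((∫ ω, X ⟨0, hn⟩ ω ∂μ) - t) ^ (ℓ / (ℓ - 1))) /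
        (ℓ * (∫ ω, X ⟨0, hn⟩ ω ^ ℓ ∂μ) ^ (1 / (ℓ - 1)))) :=
  chernoff_lower_tail_iid_nonneg_general μ n hn X hXmeas hindep hident hpos ℓ hℓ1 hℓ2 hintℓ hint1 t
    ht'
end

section
/- For every x ≥ 0 and every ℓ ∈ (1, 2], one has e^{-x} ≤ 1 - x + x^ℓ/ℓ. -/
/-! For `x ≤ 1` the claim follows from the quadratic bound `exp (-x) ≤ 1 - x + x ^ 2 / 2`, since
there `x ^ 2 / 2 ≤ x ^ ℓ / ℓ`. For `x ≥ 1`, Bernoulli's inequality bounds the right-hand side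
below by `1 / ℓ ≥ 1 / 2`, which exceeds `exp (-1) ≥ exp (-x)`. -/

open Real

/-- Follows from `1 + x + x ^ 2 / 2 ≤ exp x`, as
`(1 - x + x ^ 2 / 2) * (1 + x + x ^ 2 / 2) = 1 + x ^ 4 / 4`. -/
theorem Real.exp_neg_le_one_sub_add_sq_div_two {x : ℝ} (hx : 0 ≤ x) :
    exp (-x) ≤ 1 - x + x ^ 2 / 2 := by
  have hquad := quadratic_le_exp_of_nonneg hx
  have hpos : 0 < 1 + x + x ^ 2 / 2 := by positivity
  rw [exp_neg, inv_le_iff_one_le_mul₀ (exp_pos x)]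
  nlinarith [pow_nonneg hx 4]

theorem Real.inv_le_one_sub_add_rpow_div {x ℓ : ℝ} (hx : 0 ≤ x) (hℓ : 1 ≤ ℓ) :
    ℓ⁻¹ ≤ 1 - x + x ^ ℓ / ℓ := by
  have hbernoulli : 1 + ℓ * (x - 1) ≤ x ^ ℓ := by
    simpa using one_add_mul_self_le_rpow_one_add (s := x - 1) (by linarith) hℓ
  have hℓ0 : 0 < ℓ := by linarith
  rw [inv_eq_one_div, div_le_iff₀ hℓ0, add_mul, div_mul_cancel₀ _ hℓ0.ne']
  linarith

theorem exp_neg_le_one_sub_add_rpow (x : ℝ) (hx : 0 ≤ x) (ℓ : ℝ) (hℓ1 : 1 < ℓ) (hℓ2 : ℓ ≤ 2) :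
    Real.exp (-x) ≤ 1 - x + x ^ ℓ / ℓ := by
  rcases le_total x 1 with hx1 | hx1
  · calc exp (-x) ≤ 1 - x + x ^ 2 / 2 := exp_neg_le_one_sub_add_sq_div_two hx
      _ ≤ 1 - x + x ^ ℓ / ℓ := by
        rw [← rpow_two]
        gcongr 1 - x + ?_
        exact div_le_div₀ (by positivity) (rpow_le_rpow_of_exponent_ge' hx hx1 (by positivity) hℓ2)
          (by positivity) hℓ2
  · calc exp (-x) ≤ exp (-1) := exp_le_exp.2 (neg_le_neg hx1)
      _ ≤ 1 / 2 := exp_neg_one_lt_half.le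
      _ ≤ ℓ⁻¹ := by rw [one_div]; gcongr
      _ ≤ 1 - x + x ^ ℓ / ℓ := inv_le_one_sub_add_rpow_div hx hℓ1.le
end

section
/- For z, w ∈ ℝ define f_z(w) = √(2π) e^{w²/2} Φ(w) Φ̄(z) if w ≤ z and f_z(w) = √(2π) e^{w²/2} Φ(z) Φ̄(w) if w > z, where Φ is the standard normal CDF and Φ̄ = 1 - Φ. Then for all z, w ∈ ℝ, |z · f_z(w)| ≤ 1. -/
open MeasureTheory Real

/-- The standard solution of the Stein equation at level `z`. -/
noncomputable def steinSolution (z w : ℝ) : ℝ :=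
  if w ≤ z then
    Real.sqrt (2 * Real.pi) * Real.exp (w ^ 2 / 2) * stdNormalCDF w * (1 - stdNormalCDF z)
  else
    Real.sqrt (2 * Real.pi) * Real.exp (w ^ 2 / 2) * stdNormalCDF z * (1 - stdNormalCDF w)

/-! The Mills ratio `M(t) = √(2π) e^{t²/2} (1 - Φ(t))` equals `∫₀^∞ e^{-u²/2 - tu} du`, so it is
antitone and `t M(t) ≤ ∫₀^∞ t e^{-tu} du = 1` for `t ≥ 0`. For `w ≤ z` the Stein solution is
`M(-w) (1 - Φ(z))`, and the branch `w > z` is the reflection `(z, w) ↦ (-z, -w)` of it. If `z ≤ 0`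
then `|z| ≤ -w` and the bound is `(-w) M(-w) ≤ 1`; if `z > 0`, monotonicity in `w` gives
`z M(-w) (1 - Φ(z)) ≤ z M(-z) (1 - Φ(z)) = z M(z) Φ(z) ≤ 1`. -/

open Set

lemma integrable_exp_neg_sq_div_two : Integrable fun s : ℝ => exp (-s ^ 2 / 2) := by
  simpa [neg_div, div_eq_inv_mul] using integrable_exp_neg_mul_sq (b := 1 / 2) (by norm_num)

lemma integral_exp_neg_sq_div_two : ∫ s : ℝ, exp (-s ^ 2 / 2) = √(2 * π) := by
  simpa [neg_div, div_eq_inv_mul, div_inv_eq_mul, mul_comm] using integral_gaussian (1 / 2)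

lemma integrable_exp_neg_sq_div_two_sub_mul (t : ℝ) :
    Integrable fun u : ℝ => exp (-u ^ 2 / 2 - t * u) := by
  refine ((integrable_exp_neg_sq_div_two.comp_add_right t).const_mul (exp (t ^ 2 / 2))).congr
    (.of_forall fun u => ?_)
  simp only [← exp_add]
  ring_nf

lemma one_sub_stdNormalCDF (t : ℝ) :
    1 - stdNormalCDF t = (√(2 * π))⁻¹ * ∫ s in Ioi t, exp (-s ^ 2 / 2) := by
  have hsplit := intervalIntegral.integral_Iic_add_Ioi (b := t)
    integrable_exp_neg_sq_div_two.integrableOn integrable_exp_neg_sq_div_two.integrableOn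
  rw [integral_exp_neg_sq_div_two] at hsplit
  have hpos : 0 < √(2 * π) := by positivity
  rw [stdNormalCDF, integral_const_mul, show ∫ s in Ioi t, exp (-s ^ 2 / 2) =
    √(2 * π) - ∫ s in Iic t, exp (-s ^ 2 / 2) by linarith, mul_sub, inv_mul_cancel₀ hpos.ne']

lemma stdNormalCDF_neg (t : ℝ) : stdNormalCDF (-t) = 1 - stdNormalCDF t := by
  rw [one_sub_stdNormalCDF, stdNormalCDF, integral_const_mul, ← integral_comp_neg_Ioi]
  simp only [neg_sq]

lemma stdNormalCDF_nonneg (t : ℝ) : 0 ≤ stdNormalCDF t :=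
  setIntegral_nonneg measurableSet_Iic fun _ _ => by positivity

lemma stdNormalCDF_le_one (t : ℝ) : stdNormalCDF t ≤ 1 := by
  have h := stdNormalCDF_neg (-t)
  rw [neg_neg] at h
  linarith [stdNormalCDF_nonneg (-t)]

noncomputable def millsRatio (t : ℝ) : ℝ :=
  √(2 * π) * exp (t ^ 2 / 2) * (1 - stdNormalCDF t)

lemma millsRatio_neg (t : ℝ) : millsRatio (-t) = √(2 * π) * exp (t ^ 2 / 2) * stdNormalCDF t := by
  rw [millsRatio, stdNormalCDF_neg, neg_sq, sub_sub_cancel]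

lemma millsRatio_nonneg (t : ℝ) : 0 ≤ millsRatio t := by
  have := stdNormalCDF_le_one t
  unfold millsRatio
  exact mul_nonneg (by positivity) (by linarith)

lemma millsRatio_eq_integral (t : ℝ) : millsRatio t = ∫ u in Ioi 0, exp (-u ^ 2 / 2 - t * u) := by
  have hshift : ∫ s in Ioi t, exp (-s ^ 2 / 2) = ∫ u in Ioi 0, exp (-(u + t) ^ 2 / 2) := by
    have := (measurePreserving_add_right volume t).setIntegral_preimage_emb
      (measurableEmbedding_addRight t) (fun s => exp (-s ^ 2 / 2)) (Ioi t)
    rwa [preimage_add_const_Ioi, sub_self, eq_comm] at this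
  have hpos : 0 < √(2 * π) := by positivity
  rw [millsRatio, one_sub_stdNormalCDF, hshift, mul_comm (√(2 * π)), mul_assoc,
    mul_inv_cancel_left₀ hpos.ne', ← integral_const_mul]
  refine setIntegral_congr_fun measurableSet_Ioi fun u _ => ?_
  simp only [← exp_add]
  ring_nf

lemma millsRatio_antitone : Antitone millsRatio := by
  intro s t hst
  simp only [millsRatio_eq_integral]
  refine setIntegral_mono_on (integrable_exp_neg_sq_div_two_sub_mul t).integrableOn
    (integrable_exp_neg_sq_div_two_sub_mul s).integrableOn measurableSet_Ioi fun u hu => ?_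
  gcongr
  exact hu.le

lemma mul_millsRatio_le_one {t : ℝ} (ht : 0 ≤ t) : t * millsRatio t ≤ 1 := by
  rcases ht.eq_or_lt with rfl | ht
  · simp
  have hexp : ∫ u in Ioi 0, exp (-t * u) = t⁻¹ := by
    rw [integral_exp_mul_Ioi (neg_lt_zero.2 ht)]
    simp
  calc t * millsRatio t ≤ t * ∫ u in Ioi 0, exp (-t * u) := by
        rw [millsRatio_eq_integral]
        refine mul_le_mul_of_nonneg_left ?_ ht.le
        refine setIntegral_mono_on (integrable_exp_neg_sq_div_two_sub_mul t).integrableOn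
          (integrableOn_exp_mul_Ioi (neg_lt_zero.2 ht) 0) measurableSet_Ioi fun u _ => ?_
        gcongr
        nlinarith [sq_nonneg u]
    _ = 1 := by rw [hexp, mul_inv_cancel₀ ht.ne']

lemma steinSolution_of_le {z w : ℝ} (h : w ≤ z) :
    steinSolution z w = millsRatio (-w) * (1 - stdNormalCDF z) := by
  rw [steinSolution, if_pos h, millsRatio_neg]

lemma steinSolution_of_lt {z w : ℝ} (h : z < w) :
    steinSolution z w = millsRatio w * (1 - stdNormalCDF (-z)) := by
  rw [steinSolution, if_neg h.not_ge, millsRatio, stdNormalCDF_neg, sub_sub_cancel]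
  ring

lemma abs_mul_millsRatio_neg_mul_le_one {z w : ℝ} (h : w ≤ z) :
    |z * (millsRatio (-w) * (1 - stdNormalCDF z))| ≤ 1 := by
  have hΦ₀ := stdNormalCDF_nonneg z
  have hΦ₁ := stdNormalCDF_le_one z
  have hM := millsRatio_nonneg (-w)
  rw [abs_mul, abs_of_nonneg (mul_nonneg hM (sub_nonneg.2 hΦ₁))]
  rcases le_or_gt z 0 with hz | hz
  · calc |z| * (millsRatio (-w) * (1 - stdNormalCDF z)) ≤ -w * (millsRatio (-w) * 1) := by
          rw [abs_of_nonpos hz]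
          gcongr <;> linarith
      _ ≤ 1 := by simpa using mul_millsRatio_le_one (neg_nonneg.2 (h.trans hz))
  · have hzM : 0 ≤ z * millsRatio z := mul_nonneg hz.le (millsRatio_nonneg z)
    calc |z| * (millsRatio (-w) * (1 - stdNormalCDF z))
        ≤ z * (millsRatio (-z) * (1 - stdNormalCDF z)) := by
          rw [abs_of_pos hz]
          gcongr
          exact millsRatio_antitone (neg_le_neg h)
      _ = z * millsRatio z * stdNormalCDF z := by rw [millsRatio_neg, millsRatio]; ring
      _ ≤ z * millsRatio z * 1 := by gcongr
      _ ≤ 1 := by simpa using mul_millsRatio_le_one hz.le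

theorem abs_z_mul_stein_solution_le_one (z w : ℝ) : |z * steinSolution z w| ≤ 1 := by
  rcases le_or_gt w z with hwz | hzw
  · rw [steinSolution_of_le hwz]
    exact abs_mul_millsRatio_neg_mul_le_one hwz
  · rw [steinSolution_of_lt hzw]
    simpa using abs_mul_millsRatio_neg_mul_le_one (neg_le_neg hzw.le)
end
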